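/- arXiv:2109.08393 — 3 statements merged into one kernel-verified Lean document; each statement's English description precedes it below -/
import Mathlib

section
/- Assume E[φ(X)² exp(-θ·X)] < ∞ for all θ ∈ R^d and P(φ(X) ≠ 0) > 0, where X ~ N(0,I_d). Then v(θ) = E[φ(X)² exp(-X·θ + ‖θ‖²/2)] is strongly convex; in particular its Hessian ∇²v(θ) = E[(I_d + (θ-X)(θ-X)ᵀ) φ(X)² exp(-X·θ + ‖θ‖²/2)] satisfies ∇²v(θ) ⪰ v(θ) I_d ≻ 0 for all θ. -/
/-! Completing the square, the integrand of `v(θ)` is `c(x) exp(‖θ - x‖² / 2)` with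
`c(x) = φ(x)² e^{-‖x‖²/2} p(x) ≥ 0`, where `p` is the Gaussian density. For each `x`, the map
`θ ↦ ‖θ - x‖² / 2` is nonnegative and `1`-strongly convex, hence so is its exponential; integrating
against `c` shows that `v` is strongly convex with modulus `∫ c > 0`. For the Hessian, pairing the
integrand with `y` gives `w(x)(‖y‖² + ⟪θ - x, y⟫²) ≥ w(x)‖y‖²`; the bound `t² ≤ 2(eᵗ + e⁻ᵗ)` turns
the exponential moments into the second moments that make the vector integral meaningful. -/

open MeasureTheory Real RealInnerProductSpace

noncomputable def stdGaussDensity (d : ℕ) (x : EuclideanSpace ℝ (Fin d)) : ℝ :=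
  (2 * Real.pi) ^ (-(d : ℝ) / 2) * Real.exp (-‖x‖ ^ 2 / 2)

noncomputable def secondMoment (d : ℕ) (φ : EuclideanSpace ℝ (Fin d) → ℝ)
    (θ : EuclideanSpace ℝ (Fin d)) : ℝ :=
  ∫ x, (φ x) ^ 2 * Real.exp (-⟪x, θ⟫ + ‖θ‖ ^ 2 / 2) * stdGaussDensity d x

section StrongConvexity

variable {E : Type*} [NormedAddCommGroup E] [NormedSpace ℝ E] {s : Set E} {m : ℝ} {f : E → ℝ}

lemma StrongConvexOn.const_mul {c : ℝ} (hf : StrongConvexOn s m f) (hc : 0 ≤ c) :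
    StrongConvexOn s (c * m) fun x => c * f x := by
  refine ⟨hf.1, fun x hx y hy a b ha hb hab => ?_⟩
  calc c * f (a • x + b • y)
      ≤ c * (a • f x + b • f y - a * b * (m / 2 * ‖x - y‖ ^ 2)) :=
        mul_le_mul_of_nonneg_left (hf.2 hx hy ha hb hab) hc
    _ = a • (c * f x) + b • (c * f y) - a * b * (c * m / 2 * ‖x - y‖ ^ 2) := by
        simp only [smul_eq_mul]; ring

lemma StrongConvexOn.exp (hf : StrongConvexOn s m f) (hm : 0 ≤ m) (hf₀ : ∀ x ∈ s, 0 ≤ f x) :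
    StrongConvexOn s m fun x => exp (f x) := by
  refine ⟨hf.1, fun x hx y hy a b ha hb hab => ?_⟩
  set D := a * b * (m / 2 * ‖x - y‖ ^ 2)
  set u := f (a • x + b • y)
  have hD : 0 ≤ D := by positivity
  have hu : 0 ≤ u := hf₀ _ (hf.1 hx hy ha hb hab)
  -- `exp u * exp D ≥ exp u * (1 + D) ≥ exp u + D` since `exp u ≥ 1`.
  have hgain : Real.exp u + D ≤ Real.exp (u + D) := by
    rw [Real.exp_add]; nlinarith [add_one_le_exp D, one_le_exp hu, exp_pos u]
  have hcomb : u ≤ a • f x + b • f y - D := hf.2 hx hy ha hb hab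
  have hmono : Real.exp (u + D) ≤ Real.exp (a • f x + b • f y) := exp_le_exp.2 (by linarith)
  have hconv := convexOn_exp.2 (Set.mem_univ (f x)) (Set.mem_univ (f y)) ha hb hab
  linarith

lemma StrongConvexOn.integral {α : Type*} [MeasurableSpace α] {μ : Measure α}
    {F : E → α → ℝ} {m : α → ℝ} (hs : Convex ℝ s) (hF : ∀ t, StrongConvexOn s (m t) (F · t))
    (hFi : ∀ x ∈ s, Integrable (F x) μ) (hm : Integrable m μ) :
    StrongConvexOn s (∫ t, m t ∂μ) fun x => ∫ t, F x t ∂μ := by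
  refine ⟨hs, fun x hx y hy a b ha hb hab => ?_⟩
  set r := a * b * (‖x - y‖ ^ 2 / 2)
  have hpt : ∀ t, F (a • x + b • y) t ≤ a * F x t + b * F y t - r * m t := fun t => by
    have := (hF t).2 hx hy ha hb hab
    simp only [smul_eq_mul] at this
    linarith [show r * m t = a * b * (m t / 2 * ‖x - y‖ ^ 2) by ring]
  have hx' := (hFi x hx).const_mul a
  have hy' := (hFi y hy).const_mul b
  have hxy : Integrable (fun t => a * F x t + b * F y t) μ := hx'.add hy'
  have hle : ∫ t, F (a • x + b • y) t ∂μ ≤ ∫ t, (a * F x t + b * F y t - r * m t) ∂μ :=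
    integral_mono (hFi _ (hs hx hy ha hb hab)) (hxy.sub (hm.const_mul r)) hpt
  rw [integral_sub hxy (hm.const_mul r), integral_add hx' hy', integral_const_mul,
    integral_const_mul, integral_const_mul] at hle
  simp only [smul_eq_mul]
  linarith [show r * ∫ t, m t ∂μ = a * b * ((∫ t, m t ∂μ) / 2 * ‖x - y‖ ^ 2) by ring]

end StrongConvexity

lemma strongConvexOn_univ_half_norm_sub_sq {E : Type*} [NormedAddCommGroup E]
    [InnerProductSpace ℝ E] (x₀ : E) : StrongConvexOn Set.univ 1 fun x => ‖x - x₀‖ ^ 2 / 2 := by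
  rw [strongConvexOn_iff_convex]
  have h : (fun x => ‖x - x₀‖ ^ 2 / 2 - 1 / 2 * ‖x‖ ^ 2) = fun x => ‖x₀‖ ^ 2 / 2 - ⟪x₀, x⟫ := by
    ext x; rw [norm_sub_sq_real, real_inner_comm]; ring
  rw [h]
  exact (convexOn_const _ convex_univ).sub ((innerₗ E x₀).concaveOn convex_univ)

lemma sq_le_two_mul_exp_add_exp_neg (t : ℝ) : t ^ 2 ≤ 2 * (exp t + exp (-t)) := by
  rcases le_total 0 t with ht | ht
  · nlinarith [quadratic_le_exp_of_nonneg ht, exp_pos (-t)]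
  · nlinarith [quadratic_le_exp_of_nonneg (neg_nonneg.2 ht), exp_pos t]

section ExponentialMoments

variable {E : Type*} [NormedAddCommGroup E] [InnerProductSpace ℝ E] [FiniteDimensional ℝ E]
  [MeasurableSpace E] [BorelSpace E] {μ : Measure E} {w : E → ℝ}

lemma integrable_mul_norm_sq_of_integrable_mul_exp_inner
    (hw : ∀ η : E, Integrable (fun x => w x * exp ⟪η, x⟫) μ) :
    Integrable (fun x => w x * ‖x‖ ^ 2) μ := by
  let b := stdOrthonormalBasis ℝ E
  have hwi : Integrable w μ := by simpa using hw 0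
  have hbound : Integrable (fun x => ∑ i, 2 * (‖w x * exp ⟪b i, x⟫‖ + ‖w x * exp ⟪-b i, x⟫‖)) μ :=
    integrable_finsetSum _ fun i _ => ((hw _).norm.add (hw _).norm).const_mul 2
  refine hbound.mono' (hwi.aestronglyMeasurable.mul (continuous_norm.pow 2).aestronglyMeasurable)
    (ae_of_all _ fun x => ?_)
  calc ‖w x * ‖x‖ ^ 2‖ = |w x| * ∑ i, ⟪b i, x⟫ ^ 2 := by
        rw [b.sum_sq_inner_right, norm_mul, norm_pow, norm_norm, Real.norm_eq_abs]
    _ ≤ |w x| * ∑ i, 2 * (exp ⟪b i, x⟫ + exp (-⟪b i, x⟫)) := by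
        gcongr with i; exact sq_le_two_mul_exp_add_exp_neg _
    _ = ∑ i, 2 * (‖w x * exp ⟪b i, x⟫‖ + ‖w x * exp ⟪-b i, x⟫‖) := by
        simp only [Finset.mul_sum, norm_mul, Real.norm_eq_abs, abs_exp, inner_neg_left]
        refine Finset.sum_congr rfl fun i _ => by ring

lemma integral_mul_norm_sq_le_inner_integral (hw₀ : ∀ x, 0 ≤ w x)
    (hw : ∀ η : E, Integrable (fun x => w x * exp ⟪η, x⟫) μ) (θ y : E) :
    (∫ x, w x ∂μ) * ‖y‖ ^ 2 ≤ ⟪y, ∫ x, w x • (y + ⟪θ - x, y⟫ • (θ - x)) ∂μ⟫ := by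
  have hwi : Integrable w μ := by simpa using hw 0
  have hsq : Integrable (fun x => w x * ‖θ - x‖ ^ 2) μ := by
    refine ((hwi.mul_const (2 * ‖θ‖ ^ 2)).add
      ((integrable_mul_norm_sq_of_integrable_mul_exp_inner hw).const_mul 2)).mono'
      (hwi.aestronglyMeasurable.mul (by fun_prop)) (ae_of_all _ fun x => ?_)
    have hθx : ‖θ - x‖ ^ 2 ≤ 2 * ‖θ‖ ^ 2 + 2 * ‖x‖ ^ 2 := by
      nlinarith [norm_sub_le θ x, norm_nonneg (θ - x), sq_nonneg (‖θ‖ - ‖x‖)]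
    rw [norm_mul, Real.norm_of_nonneg (hw₀ x), norm_pow, norm_norm]
    show w x * ‖θ - x‖ ^ 2 ≤ w x * (2 * ‖θ‖ ^ 2) + 2 * (w x * ‖x‖ ^ 2)
    nlinarith [mul_le_mul_of_nonneg_left hθx (hw₀ x)]
  have hk : Integrable (fun x => w x • (y + ⟪θ - x, y⟫ • (θ - x))) μ := by
    refine ((hwi.add hsq).const_mul ‖y‖).mono'
      (hwi.aestronglyMeasurable.smul (by fun_prop)) (ae_of_all _ fun x => ?_)
    rw [norm_smul, Real.norm_of_nonneg (hw₀ x)]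
    have h1 : ‖y + ⟪θ - x, y⟫ • (θ - x)‖ ≤ ‖y‖ * (1 + ‖θ - x‖ ^ 2) := by
      refine (norm_add_le _ _).trans ?_
      rw [norm_smul, Real.norm_eq_abs]
      nlinarith [abs_real_inner_le_norm (θ - x) y, norm_nonneg (θ - x), norm_nonneg y]
    show w x * _ ≤ ‖y‖ * (w x + w x * ‖θ - x‖ ^ 2)
    nlinarith [mul_le_mul_of_nonneg_left h1 (hw₀ x)]
  rw [← integral_inner hk, ← integral_mul_const]
  refine integral_mono (hwi.mul_const _) (hk.const_inner y) fun x => ?_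
  have : ⟪y, w x • (y + ⟪θ - x, y⟫ • (θ - x))⟫ = w x * (‖y‖ ^ 2 + ⟪θ - x, y⟫ ^ 2) := by
    rw [real_inner_smul_right, inner_add_right, real_inner_smul_right, real_inner_self_eq_norm_sq,
      real_inner_comm (θ - x) y]
    ring
  rw [this]
  exact mul_le_mul_of_nonneg_left (le_add_of_nonneg_right (sq_nonneg _)) (hw₀ x)

end ExponentialMoments

lemma integral_pos_of_pos_on {α : Type*} [MeasurableSpace α] {μ : Measure α} {F : α → ℝ}
    {S : Set α} (hF : ∀ x, 0 ≤ F x) (hFi : Integrable F μ) (hS : μ S ≠ 0)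
    (hFS : ∀ x ∈ S, 0 < F x) : 0 < ∫ x, F x ∂μ :=
  (integral_pos_iff_support_of_nonneg hF hFi).2
    ((pos_iff_ne_zero.2 hS).trans_le (measure_mono fun x hx => (hFS x hx).ne'))

section GaussianSecondMoment

variable {d : ℕ} {φ : EuclideanSpace ℝ (Fin d) → ℝ}

lemma stdGaussDensity_pos (x : EuclideanSpace ℝ (Fin d)) : 0 < stdGaussDensity d x := by
  unfold stdGaussDensity; positivity

noncomputable def secondMomentIntegrand (d : ℕ) (φ : EuclideanSpace ℝ (Fin d) → ℝ)
    (θ x : EuclideanSpace ℝ (Fin d)) : ℝ :=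
  φ x ^ 2 * exp (-⟪x, θ⟫ + ‖θ‖ ^ 2 / 2) * stdGaussDensity d x

lemma secondMomentIntegrand_nonneg (θ x : EuclideanSpace ℝ (Fin d)) :
    0 ≤ secondMomentIntegrand d φ θ x := by
  have := stdGaussDensity_pos x
  unfold secondMomentIntegrand; positivity

lemma secondMomentIntegrand_eq (θ x : EuclideanSpace ℝ (Fin d)) :
    secondMomentIntegrand d φ θ x =
      φ x ^ 2 * exp (-‖x‖ ^ 2 / 2) * stdGaussDensity d x * exp (‖θ - x‖ ^ 2 / 2) := by
  have h : exp (-⟪x, θ⟫ + ‖θ‖ ^ 2 / 2) = exp (-‖x‖ ^ 2 / 2) * exp (‖θ - x‖ ^ 2 / 2) := by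
    rw [← exp_add, norm_sub_sq_real, real_inner_comm]; ring_nf
  rw [secondMomentIntegrand, h]; ring

lemma integrable_secondMomentIntegrand_mul_exp
    (hint : ∀ θ : EuclideanSpace ℝ (Fin d),
      Integrable (fun x => (φ x) ^ 2 * Real.exp (-⟪θ, x⟫) * stdGaussDensity d x))
    (θ η : EuclideanSpace ℝ (Fin d)) :
    Integrable (fun x => secondMomentIntegrand d φ θ x * exp ⟪η, x⟫) := by
  refine ((hint (θ - η)).const_mul (exp (‖θ‖ ^ 2 / 2))).congr (ae_of_all _ fun x => ?_)
  have h : exp (-⟪x, θ⟫ + ‖θ‖ ^ 2 / 2) * exp ⟪η, x⟫ = exp (‖θ‖ ^ 2 / 2) * exp (-⟪θ - η, x⟫) := by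
    rw [← exp_add, ← exp_add, inner_sub_left, real_inner_comm x θ]; ring_nf
  simp only [secondMomentIntegrand]
  linear_combination -(φ x ^ 2 * stdGaussDensity d x) * h

lemma integrable_secondMomentIntegrand
    (hint : ∀ θ : EuclideanSpace ℝ (Fin d),
      Integrable (fun x => (φ x) ^ 2 * Real.exp (-⟪θ, x⟫) * stdGaussDensity d x))
    (θ : EuclideanSpace ℝ (Fin d)) : Integrable (secondMomentIntegrand d φ θ) := by
  simpa using integrable_secondMomentIntegrand_mul_exp hint θ 0

lemma secondMoment_pos
    (hint : ∀ θ : EuclideanSpace ℝ (Fin d),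
      Integrable (fun x => (φ x) ^ 2 * Real.exp (-⟪θ, x⟫) * stdGaussDensity d x))
    (hφ : volume {x | φ x ≠ 0} ≠ 0) (θ : EuclideanSpace ℝ (Fin d)) : 0 < secondMoment d φ θ := by
  refine integral_pos_of_pos_on (secondMomentIntegrand_nonneg θ)
    (integrable_secondMomentIntegrand hint θ) hφ fun x (hx : φ x ≠ 0) => ?_
  have := stdGaussDensity_pos x
  positivity

lemma exists_pos_strongConvexOn_secondMoment
    (hint : ∀ θ : EuclideanSpace ℝ (Fin d),
      Integrable (fun x => (φ x) ^ 2 * Real.exp (-⟪θ, x⟫) * stdGaussDensity d x))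
    (hφ : volume {x | φ x ≠ 0} ≠ 0) :
    ∃ m : ℝ, 0 < m ∧ StrongConvexOn Set.univ m (secondMoment d φ) := by
  set c := fun x => φ x ^ 2 * exp (-‖x‖ ^ 2 / 2) * stdGaussDensity d x
  have hc : ∀ x, 0 ≤ c x := fun x => by have := stdGaussDensity_pos x; positivity
  have hci : Integrable c := by
    refine ((integrable_secondMomentIntegrand hint 0).mul_bdd (c := 1)
      (g := fun x => exp (-‖x‖ ^ 2 / 2)) (by fun_prop) (ae_of_all _ fun x => ?_)).congr
      (ae_of_all _ fun x => ?_)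
    · rw [Real.norm_of_nonneg (exp_pos _).le, exp_le_one_iff]
      have := sq_nonneg ‖x‖
      linarith
    · simp [secondMomentIntegrand, c, mul_right_comm _ (stdGaussDensity d x)]
  have hv : secondMoment d φ = fun θ => ∫ x, c x * exp (‖θ - x‖ ^ 2 / 2) :=
    funext fun θ => integral_congr_ae (ae_of_all _ (secondMomentIntegrand_eq θ))
  refine ⟨∫ x, c x, integral_pos_of_pos_on hc hci hφ fun x (hx : φ x ≠ 0) => ?_, ?_⟩
  · have := stdGaussDensity_pos x
    positivity
  rw [hv]
  refine StrongConvexOn.integral convex_univ (fun x => ?_) (fun θ _ => ?_) hci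
  · simpa using ((strongConvexOn_univ_half_norm_sub_sq x).exp zero_le_one
      fun _ _ => by positivity).const_mul (hc x)
  · exact (integrable_secondMomentIntegrand hint θ).congr
      (ae_of_all _ (secondMomentIntegrand_eq θ))

end GaussianSecondMoment

theorem stmt_3_general {d : ℕ} (φ : EuclideanSpace ℝ (Fin d) → ℝ)
    (hint : ∀ θ : EuclideanSpace ℝ (Fin d),
      Integrable (fun x => (φ x) ^ 2 * Real.exp (-⟪θ, x⟫) * stdGaussDensity d x))
    (hpos : 0 < ∫ x in {x | φ x ≠ 0}, stdGaussDensity d x) :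
    (∃ m : ℝ, 0 < m ∧ StrongConvexOn Set.univ m (secondMoment d φ)) ∧
      ∀ θ : EuclideanSpace ℝ (Fin d),
        0 < secondMoment d φ θ ∧
        ∀ y : EuclideanSpace ℝ (Fin d),
          secondMoment d φ θ * ‖y‖ ^ 2 ≤
            ⟪y, ∫ x, ((φ x) ^ 2 * Real.exp (-⟪x, θ⟫ + ‖θ‖ ^ 2 / 2) * stdGaussDensity d x) •
              (y + ⟪θ - x, y⟫ • (θ - x))⟫ := by
  have hφ : volume {x | φ x ≠ 0} ≠ 0 := fun h => hpos.ne' (setIntegral_measure_zero _ h)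
  exact ⟨exists_pos_strongConvexOn_secondMoment hint hφ, fun θ => ⟨secondMoment_pos hint hφ θ,
    integral_mul_norm_sq_le_inner_integral (secondMomentIntegrand_nonneg θ)
      (integrable_secondMomentIntegrand_mul_exp hint θ) θ⟩⟩

/-- `v` is strongly convex and its Hessian
`∇²v(θ) = E[(I_d + (θ-X)(θ-X)ᵀ) φ(X)² exp(-X·θ + ‖θ‖²/2)]` satisfies
`∇²v(θ) ⪰ v(θ) I_d ≻ 0`.  The matrix `I_d + (θ-x)(θ-x)ᵀ` applied to `y` is
`y + ⟪θ-x, y⟫ (θ-x)`. -/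
theorem stmt_3 {d : ℕ} (φ : EuclideanSpace ℝ (Fin d) → ℝ) (hφ : Measurable φ)
    (hint : ∀ θ : EuclideanSpace ℝ (Fin d),
      Integrable (fun x => (φ x) ^ 2 * Real.exp (-⟪θ, x⟫) * stdGaussDensity d x))
    (hpos : 0 < ∫ x in {x | φ x ≠ 0}, stdGaussDensity d x) :
    (∃ m : ℝ, 0 < m ∧ StrongConvexOn Set.univ m (secondMoment d φ)) ∧
      ∀ θ : EuclideanSpace ℝ (Fin d),
        0 < secondMoment d φ θ ∧
        ∀ y : EuclideanSpace ℝ (Fin d),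
          secondMoment d φ θ * ‖y‖ ^ 2 ≤
            ⟪y, ∫ x, ((φ x) ^ 2 * Real.exp (-⟪x, θ⟫ + ‖θ‖ ^ 2 / 2) * stdGaussDensity d x) •
              (y + ⟪θ - x, y⟫ • (θ - x))⟫ :=
  stmt_3_general φ hint hpos
end

section
/- Let Y₁, ..., Yₙ be i.i.d. copies of an integrable real random variable Y with p := P(Y > γ) ∈ (0,1). Define Tₙ = Σᵢ 1{Yᵢ > γ} and the estimator Cₙ = (1/Tₙ) Σᵢ Yᵢ 1{Yᵢ > γ} on the event {Tₙ ≥ 1} (and Cₙ = 0 on {Tₙ = 0}). Then E[Cₙ] = E[Y | Y > γ] (1 - (1-p)ⁿ); equivalently, the bias of Cₙ as an estimator of E[Y | Y > γ] equals -E[Y | Y > γ](1-p)ⁿ. -/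
/-!
Write `Bᵢ = 1{Yᵢ > γ}` and `Sᵢ = ∑_{j ≠ i} Bⱼ`. Pointwise `Cₙ = ∑ᵢ Yᵢ Bᵢ / (1 + Sᵢ)`, and `Yᵢ Bᵢ` is
independent of `Sᵢ`, so `E[Cₙ] = E[Y 1{Y > γ}] · K` with `K = ∑ᵢ E[(1 + Sᵢ)⁻¹]`. The same identity
with `Y` replaced by `1` reads `P(Tₙ ≥ 1) = p K`, and `P(Tₙ ≥ 1) = 1 - (1 - p)ⁿ` by independence;
so `K` need not be computed from the binomial law of `Sᵢ`.
-/

open MeasureTheory ProbabilityTheory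

section EmpiricalCondMean

variable {Ω E ι : Type*}

/-- With `0 / 0 = 0` the estimator is `0` when no sample lies in `A`, as in the paper. -/
noncomputable def empiricalCondMean (A : Set E) (f : E → ℝ) (s : Finset ι) (x : ι → E) : ℝ :=
  (∑ i ∈ s, A.indicator f (x i)) / ∑ i ∈ s, A.indicator 1 (x i)

section Deterministic

variable (A : Set E) (s : Finset ι) (x : ι → E)

lemma empiricalCondMean_eq_sum_mul_inv [DecidableEq ι] (f : E → ℝ) :
    empiricalCondMean A f s x =
      ∑ i ∈ s, A.indicator f (x i) * (1 + ∑ j ∈ s.erase i, A.indicator 1 (x j))⁻¹ := by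
  rw [empiricalCondMean, Finset.sum_div]
  refine Finset.sum_congr rfl fun i hi => ?_
  by_cases hxi : x i ∈ A
  · rw [← Finset.add_sum_erase s _ hi]
    simp [Set.indicator_of_mem hxi, div_eq_mul_inv]
  · simp [Set.indicator_of_notMem hxi]

lemma empiricalCondMean_one [Decidable (∃ i ∈ s, x i ∈ A)] :
    empiricalCondMean A 1 s x = if ∃ i ∈ s, x i ∈ A then 1 else 0 := by
  split_ifs with h
  · obtain ⟨i, hi, hxi⟩ := h
    have hpos : 0 < ∑ j ∈ s, A.indicator (1 : E → ℝ) (x j) :=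
      Finset.sum_pos' (fun j _ => Set.indicator_nonneg (fun _ _ => zero_le_one) _)
        ⟨i, hi, by simp [hxi]⟩
    exact div_self hpos.ne'
  · push Not at h
    have hzero : ∑ i ∈ s, A.indicator (1 : E → ℝ) (x i) = 0 :=
      Finset.sum_eq_zero fun i hi => Set.indicator_of_notMem (h i hi) _
    rw [empiricalCondMean, hzero, div_zero]

end Deterministic

section Probability

variable [MeasurableSpace Ω] [MeasurableSpace E] {μ : Measure Ω} {Y : ι → Ω → E}

lemma ProbabilityTheory.iIndepFun.indepFun_finset_sum_comp_of_notMem (hindep : iIndepFun Y μ)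
    (hmeas : ∀ i, Measurable (Y i)) {g : E → ℝ} (hg : Measurable g) {t : Finset ι} {i : ι}
    (hi : i ∉ t) : IndepFun (Y i) (fun ω => ∑ j ∈ t, g (Y j ω)) μ := by
  have h : IndepFun (Y i) (fun ω => ∑ j : t, g (Y j ω)) μ :=
    (hindep.indepFun_finset {i} t (Finset.disjoint_singleton_left.2 hi) hmeas).comp
      (measurable_pi_apply (⟨i, Finset.mem_singleton_self i⟩ : ({i} : Finset ι)))
      (show Measurable fun v : t → E => ∑ j : t, g (v j) by fun_prop)
  convert h using 2 with ω
  exact (Finset.sum_coe_sort t fun j => g (Y j ω)).symm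

lemma ProbabilityTheory.iIndepFun.measureReal_biInter_preimage_eq_pow (hindep : iIndepFun Y μ)
    {i₀ : ι} (hident : ∀ i, IdentDistrib (Y i) (Y i₀) μ μ) {B : Set E} (hB : MeasurableSet B)
    (s : Finset ι) : μ.real (⋂ i ∈ s, Y i ⁻¹' B) = μ.real (Y i₀ ⁻¹' B) ^ s.card := by
  rw [measureReal_def, hindep.meas_biInter fun i _ => ⟨B, hB, rfl⟩, ENNReal.toReal_prod,
    ← Finset.prod_const]
  exact Finset.prod_congr rfl fun i _ => congrArg ENNReal.toReal ((hident i).measure_mem_eq hB)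

variable {A : Set E} {i₀ : ι}

theorem integral_empiricalCondMean [DecidableEq ι] (hA : MeasurableSet A)
    (hmeas : ∀ i, Measurable (Y i)) (hindep : iIndepFun Y μ)
    (hident : ∀ i, IdentDistrib (Y i) (Y i₀) μ μ) {f : E → ℝ} (hf : Measurable f)
    (hint : Integrable (fun ω => f (Y i₀ ω)) μ) (s : Finset ι) :
    ∫ ω, empiricalCondMean A f s (Y · ω) ∂μ =
      (∫ ω, A.indicator f (Y i₀ ω) ∂μ) *
        ∑ i ∈ s, ∫ ω, (1 + ∑ j ∈ s.erase i, A.indicator 1 (Y j ω))⁻¹ ∂μ := by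
  have hfA : Measurable (A.indicator f) := hf.indicator hA
  have hcount : ∀ t : Finset ι, Measurable fun ω => ∑ j ∈ t, A.indicator (1 : E → ℝ) (Y j ω) :=
    fun t => Finset.measurable_sum t fun j _ => (measurable_one.indicator hA).comp (hmeas j)
  have hint_i : ∀ i, Integrable (fun ω => A.indicator f (Y i ω)) μ := fun i =>
    ((hident i).comp hfA).integrable_iff.2 <| hint.mono (hfA.comp (hmeas i₀)).aestronglyMeasurable
      (ae_of_all _ fun ω => norm_indicator_le_norm_self f (Y i₀ ω))
  have hinv_le : ∀ t : Finset ι, ∀ ω, ‖(1 + ∑ j ∈ t, A.indicator (1 : E → ℝ) (Y j ω))⁻¹‖ ≤ 1 := by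
    intro t ω
    have hcount_nonneg : 0 ≤ ∑ j ∈ t, A.indicator (1 : E → ℝ) (Y j ω) :=
      Finset.sum_nonneg fun j _ => Set.indicator_nonneg (fun _ _ => zero_le_one) _
    rw [Real.norm_of_nonneg (by positivity)]
    exact inv_le_one_of_one_le₀ (by linarith)
  have hterm : ∀ i, Integrable (fun ω => A.indicator f (Y i ω) *
      (1 + ∑ j ∈ s.erase i, A.indicator (1 : E → ℝ) (Y j ω))⁻¹) μ := fun i =>
    (hint_i i).mul_bdd ((hcount _).const_add 1).inv.aestronglyMeasurable (ae_of_all _ (hinv_le _))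
  simp_rw [empiricalCondMean_eq_sum_mul_inv]
  rw [integral_finsetSum _ fun i _ => hterm i, Finset.mul_sum]
  refine Finset.sum_congr rfl fun i _ => ?_
  rw [(hindep.indepFun_finset_sum_comp_of_notMem hmeas (measurable_one.indicator hA)
    (Finset.notMem_erase i s)).integral_fun_comp_mul_comp (g := fun x : ℝ => (1 + x)⁻¹)
    (hmeas i).aemeasurable (hcount _).aemeasurable hfA.aestronglyMeasurable
    (measurable_id.const_add 1).inv.aestronglyMeasurable]
  exact congrArg (· * _) ((hident i).comp hfA).integral_eq

theorem integral_empiricalCondMean_one (hA : MeasurableSet A)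
    (hmeas : ∀ i, Measurable (Y i)) (hindep : iIndepFun Y μ)
    (hident : ∀ i, IdentDistrib (Y i) (Y i₀) μ μ) (s : Finset ι) :
    ∫ ω, empiricalCondMean A 1 s (Y · ω) ∂μ = 1 - (1 - μ.real (Y i₀ ⁻¹' A)) ^ s.card := by
  classical
  have := hindep.isProbabilityMeasure
  have hunion : MeasurableSet (⋃ i ∈ s, Y i ⁻¹' A) :=
    Finset.measurableSet_biUnion s fun i _ => hmeas i hA
  have hfun : (fun ω => empiricalCondMean A 1 s (Y · ω)) = (⋃ i ∈ s, Y i ⁻¹' A).indicator 1 := by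
    ext ω
    simp [empiricalCondMean_one, Set.indicator_apply]
  rw [hfun, integral_indicator_one hunion, ← compl_compl (⋃ i ∈ s, Y i ⁻¹' A),
    probReal_compl_eq_one_sub hunion.compl, Set.compl_iUnion₂]
  simp_rw [← Set.preimage_compl]
  rw [hindep.measureReal_biInter_preimage_eq_pow hident hA.compl, Set.preimage_compl,
    probReal_compl_eq_one_sub (hmeas i₀ hA)]

end Probability

end EmpiricalCondMean

theorem stmt_12_general {Ω : Type*} [MeasurableSpace Ω] (μ : Measure Ω)
    (Y : ℕ → Ω → ℝ) (hmeas : ∀ i, Measurable (Y i))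
    (hindep : iIndepFun Y μ)
    (hident : ∀ i, IdentDistrib (Y i) (Y 0) μ μ)
    (hint : Integrable (Y 0) μ) (γ : ℝ) (n : ℕ)
    (hp0 : 0 < (μ {ω | γ < Y 0 ω}).toReal) :
    ∫ ω, (if (∑ i ∈ Finset.range n, if γ < Y i ω then 1 else 0 : ℕ) = 0 then (0 : ℝ)
        else (∑ i ∈ Finset.range n, if γ < Y i ω then Y i ω else 0) /
          (∑ i ∈ Finset.range n, if γ < Y i ω then (1 : ℝ) else 0)) ∂μ =
      ((∫ ω in {ω | γ < Y 0 ω}, Y 0 ω ∂μ) / (μ {ω | γ < Y 0 ω}).toReal) *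
        (1 - (1 - (μ {ω | γ < Y 0 ω}).toReal) ^ n) := by
  have := hindep.isProbabilityMeasure
  have hA : MeasurableSet (Set.Ioi γ) := measurableSet_Ioi
  have hestimator : ∀ ω, (if (∑ i ∈ Finset.range n, if γ < Y i ω then 1 else 0 : ℕ) = 0 then 0
      else (∑ i ∈ Finset.range n, if γ < Y i ω then Y i ω else 0) /
        (∑ i ∈ Finset.range n, if γ < Y i ω then (1 : ℝ) else 0)) =
      empiricalCondMean (Set.Ioi γ) id (Finset.range n) (Y · ω) := by
    intro ω
    simp only [empiricalCondMean, Set.indicator_apply, Set.mem_Ioi, id, Pi.one_apply]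
    split_ifs with h
    · have hle : ∀ i ∈ Finset.range n, ¬ γ < Y i ω := by simpa using h
      rw [Finset.sum_ite_of_false hle, Finset.sum_const_zero, zero_div]
    · rfl
  have hS : {ω | γ < Y 0 ω} = Y 0 ⁻¹' Set.Ioi γ := rfl
  have hmean : ∫ ω, (Set.Ioi γ).indicator id (Y 0 ω) ∂μ = ∫ ω in Y 0 ⁻¹' Set.Ioi γ, Y 0 ω ∂μ := by
    rw [← integral_indicator (hmeas 0 hA)]
    rfl
  have hmass : ∫ ω, (Set.Ioi γ).indicator 1 (Y 0 ω) ∂μ = μ.real (Y 0 ⁻¹' Set.Ioi γ) := by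
    rw [← integral_indicator_one (hmeas 0 hA)]
    rfl
  have hprob := integral_empiricalCondMean hA hmeas hindep hident measurable_one
    (integrable_const 1) (Finset.range n)
  rw [integral_empiricalCondMean_one hA hmeas hindep hident, hmass, Finset.card_range] at hprob
  simp_rw [hestimator, hS, ← measureReal_def] at hp0 ⊢
  rw [integral_empiricalCondMean hA hmeas hindep hident measurable_id hint, hmean, hprob]
  field_simp

/-- Bias of the empirical conditional-mean (CVaR with `θ = 0`) estimator:
for i.i.d. `Y₁, ..., Yₙ` with `p = P(Y > γ) ∈ (0,1)`,
`E[Cₙ] = E[Y | Y > γ](1 - (1-p)ⁿ)` where `Cₙ` is the mean of the samples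
exceeding `γ` (set to `0` when no sample exceeds `γ`). -/
theorem stmt_12 {Ω : Type*} [MeasurableSpace Ω] (μ : Measure Ω) [IsProbabilityMeasure μ]
    (Y : ℕ → Ω → ℝ) (hmeas : ∀ i, Measurable (Y i))
    (hindep : iIndepFun Y μ)
    (hident : ∀ i, IdentDistrib (Y i) (Y 0) μ μ)
    (hint : Integrable (Y 0) μ) (γ : ℝ) (n : ℕ)
    (hp0 : 0 < (μ {ω | γ < Y 0 ω}).toReal) (hp1 : (μ {ω | γ < Y 0 ω}).toReal < 1) :
    ∫ ω, (if (∑ i ∈ Finset.range n, if γ < Y i ω then 1 else 0 : ℕ) = 0 then (0 : ℝ)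
        else (∑ i ∈ Finset.range n, if γ < Y i ω then Y i ω else 0) /
          (∑ i ∈ Finset.range n, if γ < Y i ω then (1 : ℝ) else 0)) ∂μ =
      ((∫ ω in {ω | γ < Y 0 ω}, Y 0 ω ∂μ) / (μ {ω | γ < Y 0 ω}).toReal) *
        (1 - (1 - (μ {ω | γ < Y 0 ω}).toReal) ^ n) :=
  stmt_12_general μ Y hmeas hindep hident hint γ n hp0
end

section
/- With the setup of the empirical conditional-mean estimator: for z > γ and t ∈ {1,...,n}, P(Z₁ > z, Tₙ = t) = C(n,t) P(Y > z) P(Y > γ)^{t-1} (1 - P(Y > γ))^{n-t}, where Z₁ is the first of the samples among Y₁,...,Yₙ that exceeds γ (in order) and Tₙ = Σᵢ 1{Yᵢ > γ}. -/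
/-!
Split the event according to the exceedance pattern `S = {i < n | γ < Yᵢ}`, a `t`-subset of
`{0, …, n-1}`. Since `z > γ`, the event for a fixed `S` is the cylinder on which `Y_{min S} > z`,
`Yᵢ > γ` for the other `i ∈ S` and `Yᵢ ≤ γ` off `S`; by independence and identical distribution
it has probability `P(Y > z) P(Y > γ)^(t-1) (1 - P(Y > γ))^(n-t)`, and there are `C(n,t)` patterns.
-/

open MeasureTheory ProbabilityTheory

open Classical in
/-- `Z₁`: the value of the first sample among `Y₀, ..., Y_{n-1}` (in order)
exceeding the threshold `γ` (and `0` if none exceeds `γ`). -/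
noncomputable def firstExceedance {Ω : Type*} (Y : ℕ → Ω → ℝ) (γ : ℝ) (n : ℕ) (ω : Ω) : ℝ :=
  if hex : ∃ i, i < n ∧ γ < Y i ω then Y (Nat.find hex) ω else 0

open Finset

section Exceedance

variable {Ω : Type*} (Y : ℕ → Ω → ℝ) (γ : ℝ) (n : ℕ)

noncomputable def exceedanceSet (ω : Ω) : Finset ℕ := (range n).filter fun i => γ < Y i ω

lemma card_exceedanceSet (ω : Ω) :
    #(exceedanceSet Y γ n ω) = ∑ i ∈ range n, if γ < Y i ω then 1 else 0 :=
  card_filter _ _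

lemma coe_exceedanceSet (ω : Ω) :
    (exceedanceSet Y γ n ω : Set ℕ) = {i | i < n ∧ γ < Y i ω} := by
  ext; simp [exceedanceSet]

lemma firstExceedance_eq_of_nonempty {ω : Ω} (h : (exceedanceSet Y γ n ω).Nonempty) :
    firstExceedance Y γ n ω = Y (sInf (exceedanceSet Y γ n ω : Set ℕ)) ω := by
  have hex : ∃ i, i < n ∧ γ < Y i ω := by
    have := coe_nonempty.mpr h
    rwa [coe_exceedanceSet] at this
  rw [firstExceedance, dif_pos hex, coe_exceedanceSet,
    Nat.sInf_def (s := {i | i < n ∧ γ < Y i ω}) hex]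
  congr

def exceedanceEvent (z : ℝ) (S : Finset ℕ) : Set Ω :=
  {ω | exceedanceSet Y γ n ω = S ∧ z < Y (sInf (S : Set ℕ)) ω}

lemma setOf_lt_firstExceedance_and_card_eq {z : ℝ} {t : ℕ} (ht : 1 ≤ t) :
    {ω | z < firstExceedance Y γ n ω ∧ #(exceedanceSet Y γ n ω) = t} =
      ⋃ S ∈ powersetCard t (range n), exceedanceEvent Y γ n z S := by
  ext ω
  simp only [Set.mem_ofPred_eq, Set.mem_iUnion, mem_powersetCard, exceedanceEvent, exists_prop]
  constructor
  · rintro ⟨hz, rfl⟩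
    refine ⟨exceedanceSet Y γ n ω, ⟨filter_subset _ _, rfl⟩, rfl, ?_⟩
    rwa [← firstExceedance_eq_of_nonempty _ _ _ (card_pos.mp ht)]
  · rintro ⟨S, ⟨-, rfl⟩, rfl, hz⟩
    exact ⟨by rwa [firstExceedance_eq_of_nonempty _ _ _ (card_pos.mp ht)], rfl⟩

lemma pairwiseDisjoint_exceedanceEvent (z : ℝ) (s : Set (Finset ℕ)) :
    s.PairwiseDisjoint (exceedanceEvent Y γ n z) := by
  intro S _ S' _ hSS'
  exact Set.disjoint_left.mpr fun ω hω hω' => hSS' (hω.1.symm.trans hω'.1)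

def exceedanceConstraint (z : ℝ) (S : Finset ℕ) (k i : ℕ) : Set ℝ :=
  if i = k then Set.Ioi z else if i ∈ S then Set.Ioi γ else Set.Iic γ

lemma measurableSet_exceedanceConstraint (z : ℝ) (S : Finset ℕ) (k i : ℕ) :
    MeasurableSet (exceedanceConstraint γ z S k i) := by
  unfold exceedanceConstraint
  split_ifs <;> measurability

lemma prod_exceedanceConstraint {M : Type*} [CommMonoid M] (g : Set ℝ → M) (z : ℝ)
    {s S : Finset ℕ} (hS : S ⊆ s) {k : ℕ} (hk : k ∈ S) :
    ∏ i ∈ s, g (exceedanceConstraint γ z S k i) =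
      g (Set.Ioi z) * g (Set.Ioi γ) ^ (#S - 1) * g (Set.Iic γ) ^ (#s - #S) := by
  have hrest : ∀ i ∈ S.erase k, g (exceedanceConstraint γ z S k i) = g (Set.Ioi γ) :=
    fun i hi => by simp [exceedanceConstraint, ne_of_mem_erase hi, mem_of_mem_erase hi]
  have hout : ∀ i ∈ s \ S, g (exceedanceConstraint γ z S k i) = g (Set.Iic γ) := fun i hi => by
    obtain ⟨-, hiS⟩ := mem_sdiff.mp hi
    simp [exceedanceConstraint, hiS, (ne_of_mem_of_not_mem hk hiS).symm]
  rw [← prod_sdiff hS, ← mul_prod_erase S _ hk, prod_congr rfl hrest, prod_congr rfl hout,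
    prod_const, prod_const, card_erase_of_mem hk, card_sdiff_of_subset hS]
  simp only [exceedanceConstraint, if_true]
  ac_rfl

lemma exceedanceEvent_eq_biInter {z : ℝ} (hγz : γ ≤ z) {S : Finset ℕ} (hS : S ⊆ range n)
    (hne : S.Nonempty) :
    exceedanceEvent Y γ n z S =
      ⋂ i ∈ range n, Y i ⁻¹' exceedanceConstraint γ z S (sInf (S : Set ℕ)) i := by
  set k := sInf (S : Set ℕ)
  have hk : k ∈ S := Nat.sInf_mem (coe_nonempty.mpr hne)
  ext ω
  simp only [exceedanceEvent, Set.mem_ofPred_eq, Set.mem_iInter, Set.mem_preimage]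
  constructor
  · rintro ⟨rfl, hzk⟩ i hi
    unfold exceedanceConstraint
    split_ifs with hik hiS
    · exact hik ▸ hzk
    · exact (mem_filter.mp hiS).2
    · simpa [exceedanceSet, hi] using hiS
  · intro h
    have hzk : z < Y k ω := by simpa [exceedanceConstraint] using h k (hS hk)
    refine ⟨?_, hzk⟩
    ext i
    simp only [exceedanceSet, mem_filter]
    by_cases hik : i = k
    · subst hik
      exact ⟨fun _ => hk, fun _ => ⟨hS hk, hγz.trans_lt hzk⟩⟩
    by_cases hiS : i ∈ S
    · have := h i (hS hiS)
      simp only [exceedanceConstraint, hik, hiS, if_true, if_false] at this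
      exact ⟨fun _ => hiS, fun _ => ⟨hS hiS, this⟩⟩
    · refine ⟨fun ⟨hi, hγi⟩ => ?_, fun h' => absurd h' hiS⟩
      have := h i hi
      simp only [exceedanceConstraint, hik, hiS, if_false] at this
      exact absurd hγi (not_lt.mpr this)

end Exceedance

lemma ProbabilityTheory.iIndepFun.measure_biInter_preimage_eq_prod {Ω ι β : Type*}
    [MeasurableSpace Ω] [MeasurableSpace β] {μ : Measure Ω} {Y : ι → Ω → β}
    (hindep : iIndepFun Y μ) {X : Ω → β}
    (hident : ∀ i, IdentDistrib (Y i) X μ μ) (s : Finset ι) {B : ι → Set β}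
    (hB : ∀ i, MeasurableSet (B i)) :
    μ (⋂ i ∈ s, Y i ⁻¹' B i) = ∏ i ∈ s, μ (X ⁻¹' B i) := by
  rw [hindep.meas_biInter fun i _ => ⟨B i, hB i, rfl⟩]
  exact prod_congr rfl fun i _ => (hident i).measure_mem_eq (hB i)

lemma nullMeasurableSet_exceedanceEvent {Ω : Type*} [MeasurableSpace Ω] {μ : Measure Ω}
    {Y : ℕ → Ω → ℝ} {X : Ω → ℝ} (hident : ∀ i, IdentDistrib (Y i) X μ μ) {γ z : ℝ} (hγz : γ ≤ z)
    {n : ℕ} {S : Finset ℕ} (hS : S ⊆ range n) (hne : S.Nonempty) :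
    NullMeasurableSet (exceedanceEvent Y γ n z S) μ := by
  rw [exceedanceEvent_eq_biInter Y γ n hγz hS hne]
  exact (range n).nullMeasurableSet_biInter fun i _ => (hident i).aemeasurable_fst
    |>.nullMeasurableSet_preimage (measurableSet_exceedanceConstraint γ z S _ i)

lemma measure_exceedanceEvent {Ω : Type*} [MeasurableSpace Ω] {μ : Measure Ω}
    [IsProbabilityMeasure μ] {Y : ℕ → Ω → ℝ} (hindep : iIndepFun Y μ)
    (hident : ∀ i, IdentDistrib (Y i) (Y 0) μ μ) {γ z : ℝ} (hγz : γ ≤ z) {n : ℕ}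
    {S : Finset ℕ} (hS : S ⊆ range n) (hne : S.Nonempty) :
    μ (exceedanceEvent Y γ n z S) =
      μ {ω | z < Y 0 ω} * μ {ω | γ < Y 0 ω} ^ (#S - 1) * (1 - μ {ω | γ < Y 0 ω}) ^ (n - #S) := by
  have hle : μ (Y 0 ⁻¹' Set.Iic γ) = 1 - μ {ω | γ < Y 0 ω} := by
    rw [← Set.compl_Ioi, Set.preimage_compl,
      prob_compl_eq_one_sub₀ ((hident 0).aemeasurable_fst.nullMeasurableSet_preimage
        measurableSet_Ioi)]
    rfl
  rw [exceedanceEvent_eq_biInter Y γ n hγz hS hne,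
    hindep.measure_biInter_preimage_eq_prod hident _ (measurableSet_exceedanceConstraint γ z S _),
    prod_exceedanceConstraint γ (fun B => μ (Y 0 ⁻¹' B)) z hS
      (Nat.sInf_mem (coe_nonempty.mpr hne)),
    card_range, hle]
  rfl

theorem stmt_13_general {Ω : Type*} [MeasurableSpace Ω] (μ : Measure Ω) [IsProbabilityMeasure μ]
    (Y : ℕ → Ω → ℝ)
    (hindep : iIndepFun Y μ)
    (hident : ∀ i, IdentDistrib (Y i) (Y 0) μ μ)
    (γ : ℝ) (n : ℕ) (z : ℝ) (hz : γ < z) (t : ℕ) (ht1 : 1 ≤ t) :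
    (μ {ω | z < firstExceedance Y γ n ω ∧
        (∑ i ∈ Finset.range n, if γ < Y i ω then 1 else 0 : ℕ) = t}).toReal =
      (n.choose t : ℝ) * (μ {ω | z < Y 0 ω}).toReal *
        (μ {ω | γ < Y 0 ω}).toReal ^ (t - 1) *
        (1 - (μ {ω | γ < Y 0 ω}).toReal) ^ (n - t) := by
  have hne : ∀ S ∈ powersetCard t (range n), S ⊆ range n ∧ S.Nonempty := fun S hS => by
    obtain ⟨hS, hcard⟩ := mem_powersetCard.mp hS
    exact ⟨hS, card_pos.mp (by omega)⟩
  simp_rw [← card_exceedanceSet]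
  rw [setOf_lt_firstExceedance_and_card_eq Y γ n ht1,
    measure_biUnion_finset₀ (pairwiseDisjoint_exceedanceEvent Y γ n z _).aedisjoint
      fun S hS => nullMeasurableSet_exceedanceEvent hident hz.le (hne S hS).1 (hne S hS).2,
    sum_congr rfl fun S hS => by
      rw [measure_exceedanceEvent hindep hident hz.le (hne S hS).1 (hne S hS).2,
        (mem_powersetCard.mp hS).2],
    sum_const, card_powersetCard, card_range, nsmul_eq_mul]
  simp [ENNReal.toReal_sub_of_le prob_le_one ENNReal.one_ne_top, mul_assoc]

/-- Joint distribution of `(Z₁, Tₙ)`: for `z > γ` and `1 ≤ t ≤ n`,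
`P(Z₁ > z, Tₙ = t) = C(n,t) P(Y > z) P(Y > γ)^{t-1} (1 - P(Y > γ))^{n-t}`. -/
theorem stmt_13 {Ω : Type*} [MeasurableSpace Ω] (μ : Measure Ω) [IsProbabilityMeasure μ]
    (Y : ℕ → Ω → ℝ) (hmeas : ∀ i, Measurable (Y i))
    (hindep : iIndepFun Y μ)
    (hident : ∀ i, IdentDistrib (Y i) (Y 0) μ μ)
    (γ : ℝ) (n : ℕ) (z : ℝ) (hz : γ < z) (t : ℕ) (ht1 : 1 ≤ t) (htn : t ≤ n) :
    (μ {ω | z < firstExceedance Y γ n ω ∧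
        (∑ i ∈ Finset.range n, if γ < Y i ω then 1 else 0 : ℕ) = t}).toReal =
      (n.choose t : ℝ) * (μ {ω | z < Y 0 ω}).toReal *
        (μ {ω | γ < Y 0 ω}).toReal ^ (t - 1) *
        (1 - (μ {ω | γ < Y 0 ω}).toReal) ^ (n - t) :=
  stmt_13_general μ Y hindep hident γ n z hz t ht1
end
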